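/- arXiv:1112.3432 — 2 statements merged into one kernel-verified Lean document; each statement's English description precedes it below -/
import Mathlib

section
/- Let v, b, k, r be positive integers with b*k = v*r and v - 1 = r*(k-1). Define k^(v) = gcd(k,v), k^(r) = gcd(k,r), b^(v) = gcd(b,v), b^(r) = gcd(b,r). Then k = k^(v) * k^(r). -/
theorem Nat.coprime_of_sub_one_eq_mul {v r c : ℕ} (hv : 0 < v) (h : v - 1 = r * c) :
    v.Coprime r := by
  have hv_eq : v = r * c + 1 := by omega
  rw [hv_eq, Nat.coprime_mul_left_add_left]
  exact Nat.coprime_one_left r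

theorem Nat.gcd_mul_gcd_of_coprime_of_dvd_mul {k m n : ℕ} (hmn : m.Coprime n) (hk : k ∣ m * n) :
    k.gcd m * k.gcd n = k :=
  (hmn.gcd_mul k).symm.trans (Nat.gcd_eq_left hk)

theorem stmt2_general (v b k r : ℕ) (hv : 0 < v)
    (h1 : b * k = v * r) (h2 : v - 1 = r * (k - 1)) :
    k = Nat.gcd k v * Nat.gcd k r :=
  (Nat.gcd_mul_gcd_of_coprime_of_dvd_mul (Nat.coprime_of_sub_one_eq_mul hv h2)
    (Dvd.intro_left b h1)).symm

/-- Fang-Li: `k = gcd(k,v) * gcd(k,r)`. -/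
theorem stmt2 (v b k r : ℕ) (hv : 0 < v) (hb : 0 < b) (hk : 0 < k) (hr : 0 < r)
    (h1 : b * k = v * r) (h2 : v - 1 = r * (k - 1)) :
    k = Nat.gcd k v * Nat.gcd k r :=
  stmt2_general v b k r hv h1 h2
end

section
/- Let v, b, k, r be positive integers with b*k = v*r, v - 1 = r*(k-1), and gcd(k, v)*gcd(k, r) = k. Then b = gcd(b,v) * gcd(b,r) and v = gcd(b,v) * gcd(k,v) and r = gcd(k,r) * gcd(b,r). -/
/-!
Put `k_v = gcd(k, v)`, `k_r = gcd(k, r)`, so `k = k_v k_r`, and write `v = k_v v'`, `r = k_r r'`.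
Cancelling `k` in `b k = v r` gives `b = v' r'`. Since `gcd(k, v) = k_v gcd(k_r, v')`, the factorisation
of `k` forces `gcd(k_r, v') = 1`, and symmetrically `gcd(k_v, r') = 1`. Hence
`gcd(b, v) = v' gcd(r', k_v) = v'` and `gcd(b, r) = r'`, from which all three identities follow.
-/

namespace FangLi

theorem coprime_of_gcd_mul_mul_eq {a c x : ℕ} (ha : 0 < a) (h : Nat.gcd (a * c) (a * x) = a) :
    Nat.Coprime c x := by
  rw [Nat.gcd_mul_left] at h
  exact Nat.eq_of_mul_eq_mul_left ha (h.trans (mul_one a).symm)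

section

variable {v b k r : ℕ} (hk : 0 < k) (hkvr : Nat.gcd k v * Nat.gcd k r = k)
include hk hkvr

theorem coprime_gcd_div_gcd : Nat.Coprime (Nat.gcd k r) (v / Nat.gcd k v) := by
  refine coprime_of_gcd_mul_mul_eq (Nat.gcd_pos_of_pos_left v hk) ?_
  rw [hkvr, Nat.mul_div_cancel' (Nat.gcd_dvd_right k v)]

theorem eq_div_gcd_mul_div_gcd (h : b * k = v * r) : b = v / Nat.gcd k v * (r / Nat.gcd k r) := by
  refine Nat.eq_of_mul_eq_mul_right hk ?_
  calc b * k = v * r := h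
    _ = v / Nat.gcd k v * Nat.gcd k v * (r / Nat.gcd k r * Nat.gcd k r) := by
      rw [Nat.div_mul_cancel (Nat.gcd_dvd_right k v), Nat.div_mul_cancel (Nat.gcd_dvd_right k r)]
    _ = v / Nat.gcd k v * (r / Nat.gcd k r) * (Nat.gcd k v * Nat.gcd k r) := by ring
    _ = v / Nat.gcd k v * (r / Nat.gcd k r) * k := by rw [hkvr]

theorem gcd_left_eq_div_gcd (h : b * k = v * r) : Nat.gcd b v = v / Nat.gcd k v := by
  have hr : Nat.Coprime (r / Nat.gcd k r) (Nat.gcd k v) :=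
    (coprime_gcd_div_gcd (v := r) (r := v) hk (by rw [mul_comm, hkvr])).symm
  calc Nat.gcd b v
      = Nat.gcd (v / Nat.gcd k v * (r / Nat.gcd k r)) (v / Nat.gcd k v * Nat.gcd k v) := by
        congr 1
        · exact eq_div_gcd_mul_div_gcd hk hkvr h
        · exact (Nat.div_mul_cancel (Nat.gcd_dvd_right k v)).symm
    _ = v / Nat.gcd k v := by rw [Nat.gcd_mul_left, hr, mul_one]

theorem gcd_right_eq_div_gcd (h : b * k = v * r) : Nat.gcd b r = r / Nat.gcd k r :=
  gcd_left_eq_div_gcd (v := r) (r := v) hk (by rw [mul_comm, hkvr]) (by rw [h, mul_comm])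

end

end FangLi

open FangLi in
theorem stmt4_general (v b k r : ℕ) (hk : 0 < k)
    (h1 : b * k = v * r)
    (h3 : Nat.gcd k v * Nat.gcd k r = k) :
    b = Nat.gcd b v * Nat.gcd b r ∧ v = Nat.gcd b v * Nat.gcd k v ∧
      r = Nat.gcd k r * Nat.gcd b r := by
  rw [gcd_left_eq_div_gcd hk h3 h1, gcd_right_eq_div_gcd hk h3 h1]
  exact ⟨eq_div_gcd_mul_div_gcd hk h3 h1, (Nat.div_mul_cancel (Nat.gcd_dvd_right k v)).symm,
    (Nat.mul_div_cancel' (Nat.gcd_dvd_right k r)).symm⟩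

/-- Fang-Li identities: `b = b^(v) b^(r)`, `v = b^(v) k^(v)`, `r = k^(r) b^(r)`. -/
theorem stmt4 (v b k r : ℕ) (hv : 0 < v) (hb : 0 < b) (hk : 0 < k) (hr : 0 < r)
    (h1 : b * k = v * r) (h2 : v - 1 = r * (k - 1))
    (h3 : Nat.gcd k v * Nat.gcd k r = k) :
    b = Nat.gcd b v * Nat.gcd b r ∧ v = Nat.gcd b v * Nat.gcd k v ∧
      r = Nat.gcd k r * Nat.gcd b r :=
  stmt4_general v b k r hk h1 h3
end
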